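/- For all a ≥ 0, x ≥ 0, and n ≥ 1, the generalized Baskakov operator satisfies B_n^a(t; x) = x + ax/(n(1+x)), i.e., ∑_{k=0}^∞ W_{n,k}^a(x)·(k/n) = x + ax/(n(1+x)). -/

import Mathlib

noncomputable def rising (n i : ℕ) : ℝ := ∏ j ∈ Finset.range i, ((n : ℝ) + j)

noncomputable def pk (n : ℕ) (a : ℝ) (k : ℕ) : ℝ :=
  ∑ i ∈ Finset.range (k + 1), (k.choose i : ℝ) * rising n i * a ^ (k - i)

noncomputable def W (n : ℕ) (a x : ℝ) (k : ℕ) : ℝ :=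
  Real.exp (-(a * x) / (1 + x)) * (pk n a k / (k.factorial : ℝ)) * x ^ k / (1 + x) ^ (k + n)

/-!
Put `t = x / (1 + x)`, so that `W n a x k = e^{-at} (1 - t)^n · pk n a k t^k / k!`. The numbers
`pk n a k t^k / k!` are the Cauchy product of the coefficients of `(1 - t)^{-n} = ∑ (n)_i t^i / i!`
and of `e^{at} = ∑ (at)^j / j!`. Splitting `k = i + j`, the first moment of a Cauchy product is
`(∑ i f_i)(∑ g_j) + (∑ f_i)(∑ j g_j)`, and the two weighted series sum to `n t (1 - t)^{-n-1}` and
`a t e^{at}`. Hence `∑ k W n a x k · k = n t / (1 - t) + a t = n x + a x / (1 + x)`.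
-/

open Finset Nat

lemma rising_eq_ascFactorial (n i : ℕ) : rising n i = (n.ascFactorial i : ℝ) := by
  simp [rising, ascFactorial_eq_prod_range]

lemma rising_succ_eq_mul_rising (n i : ℕ) : rising n (i + 1) = n * rising (n + 1) i := by
  rw [rising_eq_ascFactorial, rising_eq_ascFactorial, ascFactorial_succ, ← succ_ascFactorial]
  push_cast
  ring

lemma hasSum_rising_div_factorial_mul_pow (n : ℕ) {t : ℝ} (ht : |t| < 1) :
    HasSum (fun i => rising n i / i ! * t ^ i) (1 / (1 - t) ^ n) := by
  rcases n with _ | m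
  · convert hasSum_single 0 fun i hi => ?_ using 1
    · simp [rising]
    · obtain ⟨i, rfl⟩ := exists_eq_succ_of_ne_zero hi
      simp [rising_eq_ascFactorial, zero_ascFactorial]
  · refine (hasSum_choose_mul_geometric_of_norm_lt_one m (r := t) ht).congr_fun fun i => ?_
    rw [rising_eq_ascFactorial, ascFactorial_eq_factorial_mul_choose, add_comm m i, choose_symm_add]
    push_cast
    field_simp

lemma hasSum_nat_mul_of_hasSum_succ {f : ℕ → ℝ} {s : ℝ}
    (h : HasSum (fun i : ℕ => ((i : ℝ) + 1) * f (i + 1)) s) :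
    HasSum (fun i : ℕ => (i : ℝ) * f i) s := by
  simpa using (hasSum_nat_add_iff (f := fun i => (i : ℝ) * f i) 1).mp (by exact_mod_cast h)

lemma hasSum_nat_mul_rising_div_factorial_mul_pow (n : ℕ) {t : ℝ} (ht : |t| < 1) :
    HasSum (fun i : ℕ => (i : ℝ) * (rising n i / i ! * t ^ i))
      (n * t * (1 / (1 - t) ^ (n + 1))) := by
  refine hasSum_nat_mul_of_hasSum_succ ?_
  refine ((hasSum_rising_div_factorial_mul_pow (n + 1) ht).mul_left (n * t)).congr_fun fun i => ?_
  rw [rising_succ_eq_mul_rising, factorial_succ]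
  push_cast
  field_simp
  ring

lemma hasSum_pow_div_factorial (c : ℝ) : HasSum (fun j => c ^ j / j !) (Real.exp c) := by
  rw [Real.exp_eq_exp_ℝ]
  exact NormedSpace.expSeries_div_hasSum_exp c

lemma hasSum_nat_mul_pow_div_factorial (c : ℝ) :
    HasSum (fun j : ℕ => (j : ℝ) * (c ^ j / j !)) (c * Real.exp c) := by
  refine hasSum_nat_mul_of_hasSum_succ ?_
  refine ((hasSum_pow_div_factorial c).mul_left c).congr_fun fun j => ?_
  rw [factorial_succ]
  push_cast
  field_simp
  ring

lemma hasSum_sum_antidiagonal_mul {f g : ℕ → ℝ} {A B : ℝ} (hf : HasSum f A) (hg : HasSum g B) :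
    HasSum (fun k => ∑ ij ∈ antidiagonal k, f ij.1 * g ij.2) (A * B) := by
  have hf' : Summable fun i => ‖f i‖ := summable_norm_iff.mpr hf.summable
  have hg' : Summable fun j => ‖g j‖ := summable_norm_iff.mpr hg.summable
  have h := (summable_norm_sum_mul_antidiagonal_of_summable_norm hf' hg').of_norm.hasSum
  rwa [← tsum_mul_tsum_eq_tsum_sum_antidiagonal_of_summable_norm hf' hg', hf.tsum_eq,
    hg.tsum_eq] at h

lemma hasSum_nat_mul_sum_antidiagonal_mul {f g : ℕ → ℝ} {A A' B B' : ℝ}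
    (hf : HasSum f A) (hf' : HasSum (fun i : ℕ => (i : ℝ) * f i) A')
    (hg : HasSum g B) (hg' : HasSum (fun j : ℕ => (j : ℝ) * g j) B') :
    HasSum (fun k : ℕ => (k : ℝ) * ∑ ij ∈ antidiagonal k, f ij.1 * g ij.2) (A' * B + A * B') := by
  convert (hasSum_sum_antidiagonal_mul hf' hg).add (hasSum_sum_antidiagonal_mul hf hg')
    using 2 with k
  rw [mul_sum, ← sum_add_distrib]
  refine sum_congr rfl fun ij hij => ?_
  rw [← mem_antidiagonal.mp hij]
  push_cast
  ring

lemma pk_div_factorial_mul_pow (n : ℕ) (a t : ℝ) (k : ℕ) :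
    pk n a k / k ! * t ^ k =
      ∑ ij ∈ antidiagonal k, rising n ij.1 / ij.1 ! * t ^ ij.1 * ((a * t) ^ ij.2 / ij.2 !) := by
  rw [pk, ← Nat.sum_antidiagonal_eq_sum_range_succ
    (fun i j => (k.choose i : ℝ) * rising n i * a ^ j), sum_div, sum_mul]
  refine sum_congr rfl fun ⟨i, j⟩ hij => ?_
  obtain rfl : i + j = k := mem_antidiagonal.mp hij
  have hfac : ((i + j).choose i * i ! * j ! : ℝ) = (i + j)! := by
    rw [choose_symm_add]
    exact_mod_cast add_choose_mul_factorial_mul_factorial i j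
  have hchoose : ((i + j).choose i : ℝ) ≠ 0 :=
    Nat.cast_ne_zero.mpr (choose_pos (le_add_right i j)).ne'
  rw [← hfac, mul_pow, pow_add]
  field_simp

lemma hasSum_nat_mul_pk_div_factorial_mul_pow (n : ℕ) (a : ℝ) {t : ℝ} (ht : |t| < 1) :
    HasSum (fun k : ℕ => (k : ℝ) * (pk n a k / k ! * t ^ k))
      (n * t * (1 / (1 - t) ^ (n + 1)) * Real.exp (a * t) +
        1 / (1 - t) ^ n * (a * t * Real.exp (a * t))) := by
  refine (hasSum_nat_mul_sum_antidiagonal_mul (hasSum_rising_div_factorial_mul_pow n ht)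
    (hasSum_nat_mul_rising_div_factorial_mul_pow n ht) (hasSum_pow_div_factorial (a * t))
    (hasSum_nat_mul_pow_div_factorial (a * t))).congr_fun fun k => ?_
  rw [pk_div_factorial_mul_pow]

lemma W_eq_mul_pk_div_factorial_mul_pow (n : ℕ) (a : ℝ) {x : ℝ} (hx : 1 + x ≠ 0) (k : ℕ) :
    W n a x k = Real.exp (-(a * x) / (1 + x)) / (1 + x) ^ n *
      (pk n a k / k ! * (x / (1 + x)) ^ k) := by
  rw [W, div_pow, pow_add]
  field_simp

theorem baskakov_first_moment_general (a x : ℝ) (hx : 0 ≤ x)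
    (n : ℕ) (hn : 1 ≤ n) :
    ∑' k : ℕ, W n a x k * ((k : ℝ) / n) = x + a * x / (n * (1 + x)) := by
  have hx1 : 0 < 1 + x := by linarith
  have hn0 : (n : ℝ) ≠ 0 := Nat.cast_ne_zero.mpr (by omega)
  set t := x / (1 + x) with ht_def
  set E := Real.exp (-(a * x) / (1 + x))
  have ht : |t| < 1 := by
    rw [abs_of_nonneg (by positivity), div_lt_one hx1]
    linarith
  have h1t : 1 / (1 - t) = 1 + x := by
    rw [ht_def]
    field_simp
    ring
  have hexp : E * Real.exp (a * t) = 1 := by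
    rw [← Real.exp_add, neg_div, mul_div_assoc, neg_add_cancel, Real.exp_zero]
  have hW (k : ℕ) :
      W n a x k * ((k : ℝ) / n) = E / (1 + x) ^ n / n * (k * (pk n a k / k ! * t ^ k)) := by
    rw [W_eq_mul_pk_div_factorial_mul_pow n a hx1.ne']
    ring
  rw [tsum_congr hW, ((hasSum_nat_mul_pk_div_factorial_mul_pow n a ht).mul_left _).tsum_eq,
    ← one_div_pow, ← one_div_pow, h1t]
  calc E / (1 + x) ^ n / n * (n * t * (1 + x) ^ (n + 1) * Real.exp (a * t) +
        (1 + x) ^ n * (a * t * Real.exp (a * t)))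
      = E * Real.exp (a * t) * (t * (1 + x) + a * t / n) := by
        field_simp
        ring
    _ = x + a * x / (n * (1 + x)) := by
        rw [hexp, ht_def]
        field_simp

theorem baskakov_first_moment (a x : ℝ) (ha : 0 ≤ a) (hx : 0 ≤ x)
    (n : ℕ) (hn : 1 ≤ n) :
    ∑' k : ℕ, W n a x k * ((k : ℝ) / n) = x + a * x / (n * (1 + x)) :=
  baskakov_first_moment_general a x hx n hn
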